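/- arXiv:math-ph/0404018 — 3 statements merged into one kernel-verified Lean document; each statement's English description precedes it below -/
import Mathlib

section
/- Let A and X be Hermitian n×n matrices and define F(t) = log( Tr(e^{tX} e^{−A}) / Tr(e^{−A}) ) for real t. Then F is well-defined (the argument of the logarithm is strictly positive) for all t ∈ ℝ, F(0) = 0, and F is convex in t. -/
open Matrix Filter
open scoped ComplexOrder ENNReal Classical

/-- The operator (ℓ²→ℓ²) norm of a complex matrix. -/
noncomputable def opNorm {m : ℕ} (M : Matrix (Fin m) (Fin m) ℂ) : ℝ :=
  ‖Matrix.toEuclideanCLM (𝕜 := ℂ) M‖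

/-- Matrix exponential. -/
noncomputable def mexp {m : ℕ} (M : Matrix (Fin m) (Fin m) ℂ) : Matrix (Fin m) (Fin m) ℂ :=
  NormedSpace.exp M

/-- `|X| = √(X* X)`, the positive part in the polar decomposition. -/
noncomputable def absMat {m : ℕ} (X : Matrix (Fin m) (Fin m) ℂ) : Matrix (Fin m) (Fin m) ℂ :=
  (Matrix.posSemidef_conjTranspose_mul_self X).1.eigenvectorUnitary.1 *
    diagonal ((↑) ∘ Real.sqrt ∘ (Matrix.posSemidef_conjTranspose_mul_self X).1.eigenvalues) *
    (star (Matrix.posSemidef_conjTranspose_mul_self X).1.eigenvectorUnitary : Matrix (Fin m) (Fin m) ℂ)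

/-- Positive definiteness is preserved by congruence with an invertible matrix. -/
lemma posDef_conj_aux {n : Type*} [Fintype n] [DecidableEq n] {M B : Matrix n n ℂ}
    (hM : M.PosDef) (hB : IsUnit B) : (Bᴴ * M * B).PosDef := by
  exact hM.conjTranspose_mul_mul_same (Matrix.mulVec_injective_iff_isUnit.mpr hB)

lemma unitary_isUnit {n : Type*} [Fintype n] [DecidableEq n] {U : Matrix n n ℂ}
    (hU : U ∈ Matrix.unitaryGroup n ℂ) : IsUnit U :=
  ⟨⟨U, star U, Matrix.mem_unitaryGroup_iff.mp hU, Matrix.mem_unitaryGroup_iff'.mp hU⟩, rfl⟩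

lemma unitary_star_isUnit {n : Type*} [Fintype n] [DecidableEq n] {U : Matrix n n ℂ}
    (hU : U ∈ Matrix.unitaryGroup n ℂ) : IsUnit (star U) :=
  ⟨⟨star U, U, Matrix.mem_unitaryGroup_iff'.mp hU, Matrix.mem_unitaryGroup_iff.mp hU⟩, rfl⟩

/-- exp of a Hermitian matrix is positive definite. -/
lemma mexp_posDef {m : ℕ} {M : Matrix (Fin m) (Fin m) ℂ} (hM : M.IsHermitian) :
    (mexp M).PosDef := by
  set V : Matrix (Fin m) (Fin m) ℂ := (hM.eigenvectorUnitary : Matrix (Fin m) (Fin m) ℂ)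
  have hV : V ∈ Matrix.unitaryGroup (Fin m) ℂ := hM.eigenvectorUnitary.2
  have hVinv : V⁻¹ = star V := Matrix.inv_eq_left_inv (Matrix.mem_unitaryGroup_iff'.mp hV)
  have hexp : mexp M = V * Matrix.diagonal
      (NormedSpace.exp ((RCLike.ofReal ∘ hM.eigenvalues : Fin m → ℂ))) * star V := by
    rw [mexp]
    conv_lhs => rw [(show M = V * Matrix.diagonal (RCLike.ofReal ∘ hM.eigenvalues) * star V from
        hM.spectral_theorem), ← hVinv,
      Matrix.exp_conj V _ (unitary_isUnit hV), hVinv]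
    rw [Matrix.exp_diagonal ((RCLike.ofReal ∘ hM.eigenvalues : Fin m → ℂ))]
  rw [hexp]
  have hdiag : Matrix.PosDef
      (Matrix.diagonal (NormedSpace.exp ((RCLike.ofReal ∘ hM.eigenvalues : Fin m → ℂ)))) := by
    apply Matrix.PosDef.diagonal
    intro i
    have h1 : NormedSpace.exp ((RCLike.ofReal ∘ hM.eigenvalues : Fin m → ℂ)) i
        = Complex.exp (hM.eigenvalues i) := by
      rw [Complex.exp_eq_exp_ℂ]; exact Pi.coe_exp _ i
    rw [h1, ← Complex.ofReal_exp]
    exact_mod_cast Real.exp_pos _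
  have hrw : V * Matrix.diagonal (NormedSpace.exp ((RCLike.ofReal ∘ hM.eigenvalues : Fin m → ℂ))) * star V
      = (star V)ᴴ * Matrix.diagonal (NormedSpace.exp (RCLike.ofReal ∘ hM.eigenvalues))
        * star V := by
    rw [Matrix.star_eq_conjTranspose, Matrix.conjTranspose_conjTranspose]
  rw [hrw]
  exact posDef_conj_aux hdiag (unitary_star_isUnit hV)

/-- `F(t) = log(Tr(e^{tX} e^{-A})/Tr(e^{-A}))` is well defined (the argument of the log is
positive), vanishes at `0`, and is convex. -/
theorem stmt3 {m : ℕ} (hm : 0 < m) (A X : Matrix (Fin m) (Fin m) ℂ)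
    (hA : A.IsHermitian) (hX : X.IsHermitian)
    (F : ℝ → ℝ)
    (hF : ∀ t : ℝ, F t =
      Real.log ((mexp (t • X) * mexp (-A)).trace.re / (mexp (-A)).trace.re)) :
    (∀ t : ℝ, 0 < (mexp (t • X) * mexp (-A)).trace.re / (mexp (-A)).trace.re) ∧
    F 0 = 0 ∧ ConvexOn ℝ Set.univ F := by
  set B : Matrix (Fin m) (Fin m) ℂ := mexp (-A) with hBdef
  have hB : B.PosDef := mexp_posDef hA.neg
  set U : Matrix (Fin m) (Fin m) ℂ := (hX.eigenvectorUnitary : Matrix (Fin m) (Fin m) ℂ)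
    with hUdef
  have hU : U ∈ Matrix.unitaryGroup (Fin m) ℂ := hX.eigenvectorUnitary.2
  have hUinv : U⁻¹ = star U := Matrix.inv_eq_left_inv (Matrix.mem_unitaryGroup_iff'.mp hU)
  set μ : Fin m → ℝ := hX.eigenvalues with hμdef
  have hspec : X = U * Matrix.diagonal (RCLike.ofReal ∘ μ) * star U := hX.spectral_theorem
  set C : Matrix (Fin m) (Fin m) ℂ := star U * B * U with hCdef
  have hC : C.PosDef := by
    have h := posDef_conj_aux hB (unitary_isUnit hU)
    rw [hCdef, Matrix.star_eq_conjTranspose]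
    exact h
  set c : Fin m → ℝ := fun k => (C k k).re with hcdef
  have hcpos : ∀ k, 0 < c k := by
    intro k
    have hx : (Pi.single k 1 : Fin m → ℂ) ≠ 0 := by
      intro h; simpa using congrFun h k
    have h2 : dotProduct (star (Pi.single k 1 : Fin m → ℂ)) (C *ᵥ Pi.single k 1)
        = C k k := by
      simp [dotProduct, Matrix.mulVec_single, Pi.single_apply, apply_ite]
    have h3 := hC.re_dotProduct_pos hx
    rw [h2] at h3
    simpa [hcdef] using h3
  set g : ℝ → ℝ := fun t => ∑ k, c k * Real.exp (t * μ k) with hgdef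
  have hgpos : ∀ t, 0 < g t := fun t =>
    Finset.sum_pos (fun k _ => mul_pos (hcpos k) (Real.exp_pos _))
      (Finset.univ_nonempty_iff.mpr ⟨⟨0, hm⟩⟩)
  -- the key trace identity
  have htr : ∀ t : ℝ, (mexp (t • X) * B).trace.re = g t := by
    intro t
    have h1 : Matrix.diagonal (fun k => ((t * μ k : ℝ) : ℂ))
        = (t : ℂ) • Matrix.diagonal (RCLike.ofReal ∘ μ) := by
      ext i j
      by_cases h : i = j <;> simp [Matrix.diagonal_apply, h, Complex.ofReal_mul]
    have hsmul : t • X = U * Matrix.diagonal (fun k => ((t * μ k : ℝ) : ℂ)) * star U := by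
      rw [h1, Matrix.mul_smul, Matrix.smul_mul, ← hspec]
      ext i j
      simp [Complex.real_smul]
    have hexp : mexp (t • X)
        = U * Matrix.diagonal (fun k => Complex.exp ((t * μ k : ℝ) : ℂ)) * star U := by
      rw [mexp, hsmul, ← hUinv, Matrix.exp_conj U _ (unitary_isUnit hU),
        Matrix.exp_diagonal (fun k => ((t * μ k : ℝ) : ℂ)), hUinv]
      have : NormedSpace.exp (fun k => ((t * μ k : ℝ) : ℂ))
          = fun k => Complex.exp ((t * μ k : ℝ) : ℂ) := by
        funext k; rw [Complex.exp_eq_exp_ℂ]; exact Pi.coe_exp _ k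
      rw [this]
    rw [hexp]
    have e1 : U * Matrix.diagonal (fun k => Complex.exp ((t * μ k : ℝ) : ℂ)) * star U * B
        = U * (Matrix.diagonal (fun k => Complex.exp ((t * μ k : ℝ) : ℂ)) * (star U * B)) := by
      simp [mul_assoc]
    rw [e1, Matrix.trace_mul_comm, mul_assoc, ← hCdef]
    rw [Matrix.trace]
    simp only [Matrix.diag_apply, Matrix.diagonal_mul]
    rw [Complex.re_sum]
    refine Finset.sum_congr rfl fun k _ => ?_
    rw [← Complex.ofReal_exp, Complex.re_ofReal_mul]
    simp only [hcdef]
    ring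
  have hdenom : B.trace.re = g 0 := by
    have h0 : mexp ((0:ℝ) • X) = 1 := by
      rw [zero_smul, mexp, NormedSpace.exp_zero]
    have h := htr 0
    rwa [h0, one_mul] at h
  have hpos : ∀ t : ℝ, 0 < (mexp (t • X) * B).trace.re / B.trace.re := by
    intro t
    rw [htr t, hdenom]
    exact div_pos (hgpos t) (hgpos 0)
  refine ⟨hpos, ?_, ?_⟩
  · rw [hF 0, htr 0, hdenom, div_self (hgpos 0).ne', Real.log_one]
  -- convexity
  have hF' : ∀ t, F t = Real.log (g t) - Real.log (g 0) := by
    intro t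
    rw [hF t, htr t, hdenom, Real.log_div (hgpos t).ne' (hgpos 0).ne']
  refine ⟨convex_univ, fun x _ y _ a b ha hb hab => ?_⟩
  simp only [hF', smul_eq_mul]
  have hgx := hgpos x
  have hgy := hgpos y
  have hprod : 0 < g x ^ a * g y ^ b :=
    mul_pos (Real.rpow_pos_of_pos hgx a) (Real.rpow_pos_of_pos hgy b)
  have key : g (a * x + b * y) ≤ g x ^ a * g y ^ b := by
    rw [← div_le_one hprod]
    have hterm : ∀ k ∈ (Finset.univ : Finset (Fin m)),
        c k * Real.exp ((a * x + b * y) * μ k) / (g x ^ a * g y ^ b)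
        ≤ a * (c k * Real.exp (x * μ k) / g x) + b * (c k * Real.exp (y * μ k) / g y) := by
      intro k _
      have hp : (0:ℝ) ≤ c k * Real.exp (x * μ k) / g x :=
        div_nonneg (mul_pos (hcpos k) (Real.exp_pos _)).le hgx.le
      have hq : (0:ℝ) ≤ c k * Real.exp (y * μ k) / g y :=
        div_nonneg (mul_pos (hcpos k) (Real.exp_pos _)).le hgy.le
      refine le_trans (le_of_eq ?_) (Real.geom_mean_le_arith_mean2_weighted ha hb hp hq hab)
      rw [Real.div_rpow (mul_pos (hcpos k) (Real.exp_pos _)).le hgx.le,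
        Real.div_rpow (mul_pos (hcpos k) (Real.exp_pos _)).le hgy.le,
        div_mul_div_comm,
        Real.mul_rpow (hcpos k).le (Real.exp_pos _).le,
        Real.mul_rpow (hcpos k).le (Real.exp_pos _).le,
        ← Real.exp_mul, ← Real.exp_mul]
      congr 1
      rw [mul_mul_mul_comm, ← Real.rpow_add (hcpos k), hab, Real.rpow_one, ← Real.exp_add]
      congr 2
      ring
    calc g (a * x + b * y) / (g x ^ a * g y ^ b)
        = ∑ k, c k * Real.exp ((a * x + b * y) * μ k) / (g x ^ a * g y ^ b) := by
          rw [hgdef]; exact Finset.sum_div _ _ _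
      _ ≤ ∑ k, (a * (c k * Real.exp (x * μ k) / g x)
            + b * (c k * Real.exp (y * μ k) / g y)) := Finset.sum_le_sum hterm
      _ = a * (g x / g x) + b * (g y / g y) := by
          rw [Finset.sum_add_distrib, ← Finset.mul_sum, ← Finset.mul_sum,
            ← Finset.sum_div, ← Finset.sum_div, hgdef]
      _ = 1 := by rw [div_self hgx.ne', div_self hgy.ne', mul_one, mul_one, hab]
  have hlog : Real.log (g (a * x + b * y)) ≤ a * Real.log (g x) + b * Real.log (g y) := by
    calc Real.log (g (a * x + b * y)) ≤ Real.log (g x ^ a * g y ^ b) :=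
          Real.log_le_log (hgpos _) key
      _ = a * Real.log (g x) + b * Real.log (g y) := by
          rw [Real.log_mul (Real.rpow_pos_of_pos hgx a).ne' (Real.rpow_pos_of_pos hgy b).ne',
            Real.log_rpow hgx, Real.log_rpow hgy]
  have e : a * (Real.log (g x) - Real.log (g 0)) + b * (Real.log (g y) - Real.log (g 0))
      = a * Real.log (g x) + b * Real.log (g y) - Real.log (g 0) := by
    linear_combination (-Real.log (g 0)) * hab
  rw [e]
  linarith [hlog]
end

section
/- Let {γ_α}_{α∈I} be a finite admissible set of polymers, where γ_α is a sequence of k(α) finite sets. Then the number of sequences Γ of finite sets whose collection of maximally connected subsequences is exactly {γ_α}_{α∈I} equals the multinomial coefficient (Σ_α k(α))! / ∏_α k(α)!. -/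
open scoped Classical

/-- The intersection graph of a finite family of finite sets: `i ~ j` iff the sets overlap. -/
def interGraph {ι : Type} [DecidableEq ι] {n : ℕ} (Γ : Fin n → Finset ι) :
    SimpleGraph (Fin n) :=
  SimpleGraph.fromRel (fun i j => (Γ i ∩ Γ j).Nonempty)

/-- A finite sequence of finite sets is connected if its intersection graph is connected. -/
def SeqConnected {ι : Type} [DecidableEq ι] (L : List (Finset ι)) : Prop :=
  (interGraph (fun i : Fin L.length => L.get i)).Connected

/-- `Γ` has `{γ α}` as its collection of maximally connected subsequences: there is a labelling
`c` of the entries of `Γ` by polymers such that labels agree exactly on connected components of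
the intersection graph of `Γ`, and extracting the entries with label `α` (in increasing order
of their positions) recovers `γ α`. -/
def MaxConnDecomp {ι : Type} [DecidableEq ι] {I : Type} {N : ℕ}
    (Γ : Fin N → Finset ι) (γ : I → List (Finset ι)) : Prop :=
  ∃ c : Fin N → I,
    (∀ i j : Fin N, c i = c j ↔
      (interGraph Γ).connectedComponentMk i = (interGraph Γ).connectedComponentMk j) ∧
    ∀ α : I, ((Finset.univ.filter (fun i : Fin N => c i = α)).sort (· ≤ ·)).map Γ = γ α

open Finset Equiv
open scoped Nat

/-! A sequence `Γ` with decomposition `{γ α}` is determined by the labelling `c` of its positions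
by polymers: the entries labelled `α` are those of `γ α`, in order (`interleave`). Conversely,
every labelling with `|c⁻¹(α)| = k(α)` produces such a `Γ`: connectedness of the polymers joins
each label class, and admissibility forbids overlaps across classes, so the label classes are
exactly the connected components. As the sets are nonempty and pairwise disjoint, the label of a
position can be read off its entry, so different labellings give different sequences. Finally,
the labellings with prescribed fibre sizes form one orbit of the permutations of the positions,
with stabiliser of order `∏ k(α)!`. -/

section Labelling

variable {α ι : Type*} [Fintype α]

theorem exists_comp_perm_eq {f c : α → ι} (h : ∀ i, #{a | c a = i} = #{a | f a = i}) :
    ∃ σ : Perm α, f ∘ σ = c := by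
  have e : ∀ i, {a // c a = i} ≃ {a // f a = i} := fun i =>
    Fintype.equivOfCardEq (by simpa only [Fintype.card_subtype] using h i)
  exact ⟨ofFiberEquiv e, funext (ofFiberEquiv_map e)⟩

theorem card_fiber_comp_perm (f : α → ι) (σ : Perm α) (i : ι) :
    #{a | f (σ a) = i} = #{a | f a = i} :=
  card_equiv σ (by simp)

variable [DecidableEq α]

theorem card_comp_perm_eq_card_stabilizer {f c : α → ι} {σ₀ : Perm α} (h : f ∘ σ₀ = c) :
    #{σ : Perm α | f ∘ σ = c} = #{g : Perm α | f ∘ g = f} := by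
  subst h
  refine card_bij' (fun σ _ => σ * σ₀⁻¹) (fun g _ => g * σ₀) ?_ ?_ (fun _ _ => by simp)
    (fun _ _ => by simp)
  · simp only [mem_filter, mem_univ, true_and]
    intro σ hσ
    rw [Perm.coe_mul, ← Function.comp_assoc, hσ, Function.comp_assoc, ← Perm.coe_mul,
      mul_inv_cancel, Perm.coe_one, Function.comp_id]
  · simp only [mem_filter, mem_univ, true_and]
    intro g hg
    rw [Perm.coe_mul, ← Function.comp_assoc, hg]

theorem card_sameFiberCards_mul_prod_factorial [Fintype ι] (f : α → ι) :
    #{c : α → ι | ∀ i, #{a | c a = i} = #{a | f a = i}} * ∏ i, (#{a | f a = i})! =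
      (Fintype.card α)! := by
  set S := ({c : α → ι | ∀ i, #{a | c a = i} = #{a | f a = i}} : Finset _)
  have hmaps : Set.MapsTo (fun σ : Perm α => f ∘ σ) (univ : Finset (Perm α)) S := fun σ _ => by
    simpa [S] using card_fiber_comp_perm f σ
  calc #S * ∏ i, (#{a | f a = i})!
      = ∑ c ∈ S, #{σ : Perm α | f ∘ σ = c} := by
        rw [card_eq_sum_ones, sum_mul, one_mul]
        refine sum_congr rfl fun c hc => ?_
        obtain ⟨σ₀, hσ₀⟩ := exists_comp_perm_eq (mem_filter.mp hc).2
        rw [card_comp_perm_eq_card_stabilizer hσ₀, ← Fintype.card_subtype,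
          DomMulAct.stabilizer_card]
        simp only [Fintype.card_subtype]
    _ = (Fintype.card α)! := by
        rw [← card_eq_sum_card_fiberwise hmaps, Finset.card_univ, Fintype.card_perm]

theorem card_fiberCards_eq_multinomial {I : Type*} [Fintype I] (k : I → ℕ) :
    #{c : Fin (∑ a, k a) → I | ∀ a, #{i | c i = a} = k a} = Nat.multinomial univ k := by
  let e : Fin (∑ a, k a) ≃ Σ a, Fin (k a) := (Fintype.equivFinOfCardEq (by simp)).symm
  have hfiber : ∀ a, #{i | (e i).1 = a} = k a := fun a => by
    rw [← Fintype.card_subtype, Fintype.card_congr ((e.subtypeEquiv fun _ => Iff.rfl).trans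
      (sigmaSubtype a)), Fintype.card_fin]
  have h := card_sameFiberCards_mul_prod_factorial (fun i => (e i).1)
  simp only [hfiber, Fintype.card_fin] at h
  rw [← Nat.multinomial_spec, mul_comm] at h
  exact Nat.eq_of_mul_eq_mul_left (prod_pos fun a _ => Nat.factorial_pos (k a)) h

end Labelling

theorem SimpleGraph.Reachable.apply_eq_of_adj {V β : Type*} {G : SimpleGraph V} {f : V → β}
    (h : ∀ ⦃u v⦄, G.Adj u v → f u = f v) {u v : V} (huv : G.Reachable u v) : f u = f v := by
  obtain ⟨w⟩ := huv
  induction w with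
  | nil => rfl
  | cons hadj _ ih => exact (h hadj).trans ih

theorem reachable_of_seqConnected_map {ι : Type} [DecidableEq ι] {N : ℕ} {Γ : Fin N → Finset ι}
    {l : List (Fin N)} (hl : l.Nodup) (hconn : SeqConnected (l.map Γ)) {i j : Fin N}
    (hi : i ∈ l) (hj : j ∈ l) :
    (interGraph Γ).Reachable i j := by
  have hlen : (l.map Γ).length = l.length := l.length_map Γ
  let hom : interGraph (fun p : Fin (l.map Γ).length => (l.map Γ).get p) →g interGraph Γ :=
    { toFun := fun p => l.get (p.cast hlen)
      map_rel' := fun {p q} hpq => by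
        simp only [interGraph, SimpleGraph.fromRel_adj, List.get_eq_getElem, List.getElem_map,
          Fin.val_cast] at hpq ⊢
        refine ⟨fun h => hpq.1 (Fin.ext ?_), hpq.2⟩
        simpa using (hl.getElem_inj_iff).mp h }
  obtain ⟨p, rfl⟩ := List.get_of_mem hi
  obtain ⟨q, rfl⟩ := List.get_of_mem hj
  simpa [hom] using ((hconn.preconnected (p.cast hlen.symm) (q.cast hlen.symm)).map hom)

section Polymer

variable {ι : Type} {I : Type} {N : ℕ}

noncomputable def labelPositions (c : Fin N → I) (α : I) : List (Fin N) :=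
  (univ.filter fun i => c i = α).sort (· ≤ ·)

theorem mem_labelPositions {c : Fin N → I} {α : I} {i : Fin N} :
    i ∈ labelPositions c α ↔ c i = α := by
  simp [labelPositions]

theorem length_labelPositions (c : Fin N → I) (α : I) :
    (labelPositions c α).length = #{i | c i = α} :=
  length_sort _

theorem nodup_labelPositions (c : Fin N → I) (α : I) : (labelPositions c α).Nodup :=
  sort_nodup _ _

/-- The entries of `γ α`, in order, placed at the positions labelled `α` (and `∅` at labelled
positions beyond the length of `γ α`). -/
noncomputable def interleave (γ : I → List (Finset ι)) (c : Fin N → I) (i : Fin N) :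
    Finset ι :=
  (γ (c i)).getD ((labelPositions c (c i)).idxOf i) ∅

theorem map_interleave {γ : I → List (Finset ι)} {c : Fin N → I} {α : I}
    (hc : #{i | c i = α} = (γ α).length) :
    (labelPositions c α).map (interleave γ c) = γ α := by
  refine List.ext_getElem (by simp [length_labelPositions, hc]) fun n h₁ h₂ => ?_
  rw [List.length_map] at h₁
  rw [List.getElem_map]
  have hα : c (labelPositions c α)[n] = α := mem_labelPositions.mp (List.getElem_mem _)
  rw [interleave, hα, (nodup_labelPositions c α).idxOf_getElem, List.getD_eq_getElem]

theorem interleave_mem_or_eq_empty (γ : I → List (Finset ι)) (c : Fin N → I) (i : Fin N) :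
    interleave γ c i ∈ γ (c i) ∨ interleave γ c i = ∅ := by
  by_cases h : (labelPositions c (c i)).idxOf i < (γ (c i)).length
  · exact .inl (by rw [interleave, List.getD_eq_getElem _ _ h]; exact List.getElem_mem _)
  · exact .inr (List.getD_eq_default _ _ (not_lt.mp h))

theorem card_eq_length_of_map_eq {Γ : Fin N → Finset ι} {γ : I → List (Finset ι)}
    {c : Fin N → I} {α : I} (h : (labelPositions c α).map Γ = γ α) :
    #{i | c i = α} = (γ α).length := by
  rw [← h, List.length_map, length_labelPositions]

theorem eq_interleave_of_map_eq {Γ : Fin N → Finset ι} {γ : I → List (Finset ι)}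
    {c : Fin N → I} (h : ∀ α, (labelPositions c α).map Γ = γ α) : Γ = interleave γ c := by
  funext i
  have hmap := (h (c i)).trans (map_interleave (card_eq_length_of_map_eq (h (c i)))).symm
  exact List.map_eq_map_iff.mp hmap i (mem_labelPositions.mpr rfl)

theorem mem_of_map_eq {Γ : Fin N → Finset ι} {γ : I → List (Finset ι)} {c : Fin N → I}
    (h : ∀ α, (labelPositions c α).map Γ = γ α) (i : Fin N) : Γ i ∈ γ (c i) :=
  h (c i) ▸ List.mem_map_of_mem (mem_labelPositions.mpr rfl)

section Admissible

variable {γ : I → List (Finset ι)}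
  (hadm : ∀ α α', α ≠ α' → ∀ A ∈ γ α, ∀ B ∈ γ α', Disjoint A B)
include hadm

theorem eq_of_mem_of_mem (hnonempty : ∀ α, ∀ A ∈ γ α, A.Nonempty) {A : Finset ι} {α α' : I}
    (hα : A ∈ γ α) (hα' : A ∈ γ α') : α = α' := by
  by_contra hne
  obtain ⟨x, hx⟩ := hnonempty α A hα
  exact Finset.disjoint_left.mp (hadm α α' hne A hα A hα') hx hx

theorem eq_of_map_eq (hnonempty : ∀ α, ∀ A ∈ γ α, A.Nonempty) {Γ : Fin N → Finset ι}
    {c c' : Fin N → I} (h : ∀ α, (labelPositions c α).map Γ = γ α)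
    (h' : ∀ α, (labelPositions c' α).map Γ = γ α) : c = c' :=
  funext fun i => eq_of_mem_of_mem hadm hnonempty (mem_of_map_eq h i) (mem_of_map_eq h' i)

variable [DecidableEq ι]

theorem label_eq_of_adj_interleave {c : Fin N → I} {i j : Fin N}
    (h : (interGraph (interleave γ c)).Adj i j) : c i = c j := by
  rw [interGraph, SimpleGraph.fromRel_adj] at h
  by_contra hne
  have hdisj : Disjoint (interleave γ c i) (interleave γ c j) := by
    rcases interleave_mem_or_eq_empty γ c i with hi | hi
    · rcases interleave_mem_or_eq_empty γ c j with hj | hj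
      · exact hadm _ _ hne _ hi _ hj
      · simp [hj]
    · simp [hi]
  rcases h.2 with hij | hij
  exacts [hij.not_disjoint hdisj, hij.not_disjoint hdisj.symm]

theorem maxConnDecomp_interleave (hconn : ∀ α, SeqConnected (γ α)) {c : Fin N → I}
    (hc : ∀ α, #{i | c i = α} = (γ α).length) : MaxConnDecomp (interleave γ c) γ := by
  refine ⟨c, fun i j => ⟨fun hij => ?_, fun hij => ?_⟩, fun α => map_interleave (hc α)⟩
  · refine SimpleGraph.ConnectedComponent.eq.mpr <| reachable_of_seqConnected_map
      (nodup_labelPositions c (c i)) ?_ (mem_labelPositions.mpr rfl)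
      (mem_labelPositions.mpr hij.symm)
    rw [map_interleave (hc _)]
    exact hconn _
  · exact (SimpleGraph.ConnectedComponent.eq.mp hij).apply_eq_of_adj
      fun _ _ => label_eq_of_adj_interleave hadm

noncomputable def interleaveEquiv (hnonempty : ∀ α, ∀ A ∈ γ α, A.Nonempty)
    (hconn : ∀ α, SeqConnected (γ α)) :
    {c : Fin N → I // ∀ α, #{i | c i = α} = (γ α).length} ≃
      {Γ : Fin N → Finset ι // MaxConnDecomp Γ γ} :=
  Equiv.ofBijective (fun c => ⟨interleave γ c, maxConnDecomp_interleave hadm hconn c.2⟩) <| by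
    refine ⟨fun c c' h => Subtype.ext ?_, fun ⟨Γ, c, _, hmap⟩ => ?_⟩
    · have h : interleave γ c.1 = interleave γ c'.1 := congrArg Subtype.val h
      refine eq_of_map_eq hadm hnonempty (fun α => map_interleave (c.2 α)) ?_
      exact fun α => h ▸ map_interleave (c'.2 α)
    · have hmap : ∀ α, (labelPositions c α).map Γ = γ α := hmap
      exact ⟨⟨c, fun α => card_eq_length_of_map_eq (hmap α)⟩,
        Subtype.ext (eq_interleave_of_map_eq hmap).symm⟩

end Admissible

end Polymer

theorem stmt14_general {d : ℕ} {I : Type} [Fintype I]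
    (γ : I → List (Finset (Fin d → ℤ)))
    (hnonempty : ∀ α, ∀ A ∈ γ α, A.Nonempty)
    (hconn : ∀ α, SeqConnected (γ α))
    (hadm : ∀ α α', α ≠ α' → ∀ A ∈ γ α, ∀ B ∈ γ α', Disjoint A B)
    (N : ℕ) (hN : N = ∑ α, (γ α).length) :
    Nat.card {Γ : Fin N → Finset (Fin d → ℤ) // MaxConnDecomp Γ γ}
      = Nat.multinomial Finset.univ (fun α => (γ α).length) := by
  subst hN
  rw [← Nat.card_congr (interleaveEquiv hadm hnonempty hconn), Nat.card_eq_fintype_card,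
    Fintype.card_subtype]
  exact card_fiberCards_eq_multinomial _

/-- Counting: the number of sequences `Γ` of finite sets whose collection of maximally
connected subsequences is exactly the admissible family of polymers `{γ α}` equals the
multinomial coefficient `(Σ_α k(α))! / ∏_α k(α)!`. -/
theorem stmt14 {d : ℕ} {I : Type} [Fintype I] [DecidableEq I]
    (γ : I → List (Finset (Fin d → ℤ)))
    (hne : ∀ α, γ α ≠ [])
    (hnonempty : ∀ α, ∀ A ∈ γ α, A.Nonempty)
    (hconn : ∀ α, SeqConnected (γ α))
    (hadm : ∀ α α', α ≠ α' → ∀ A ∈ γ α, ∀ B ∈ γ α', Disjoint A B)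
    (N : ℕ) (hN : N = ∑ α, (γ α).length) :
    Nat.card {Γ : Fin N → Finset (Fin d → ℤ) // MaxConnDecomp Γ γ}
      = Nat.multinomial Finset.univ (fun α => (γ α).length) :=
  stmt14_general γ hnonempty hconn hadm N hN
end

section
/- (Kotecky–Preiss style induction bound) Let φ : {finite subsets of ℤ^d} → [0,∞) be translation-invariant-bounded in the sense that sup_x Σ_{B ∋ x} φ(B) e^{a|B|} ≤ a for some a > 0. Define, for a finite collection Δ of finite sets and B ∈ Δ, Y(Δ|B) = Σ_{l≥1} Σ over subsets {B_1,…,B_l} ⊂ Δ containing B with connected intersection graph of ∏_i φ(B_i). Then sup_x Σ_{B∋x, B∈Δ} Y(Δ|B) ≤ a, uniformly in the finite collection Δ. -/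
open scoped Classical ENNReal

/-- A finite collection of finite sets is connected if its intersection graph (edge iff
nonempty intersection) is connected. -/
def FamConnected {ι : Type} [DecidableEq ι] (S : Finset (Finset ι)) : Prop :=
  (SimpleGraph.fromRel (fun A B : S => (A.1 ∩ B.1).Nonempty)).Connected

/-!
Induction on `Δ`. For a connected `S ∋ B`, the components of `S.erase B` are pairwise disjoint
connected subfamilies of `Δ.erase B`, each meeting `B`, and they determine `S`. Hence
`Y(Δ|B) ≤ φ(B) · ∑_U ∏_{c ∈ U} w(c) = φ(B) · ∏_c (1 + w(c)) ≤ φ(B) · exp (∑_c w(c))`, with `c`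
over the connected subfamilies of `Δ.erase B` meeting `B` and `w(c) = ∏_{D ∈ c} φ(D)`.
Charging each `c` to a point `x ∈ B` and a member `D ∋ x` of `c` gives
`∑_c w(c) ≤ ∑_{x ∈ B} ∑_{D ∋ x} Y(Δ.erase B|D) ≤ a · |B|` by the induction hypothesis, and the
assumption on `φ` then closes the induction.
-/

open Finset

theorem Finset.sum_biUnion_le {α β M : Type*} [DecidableEq α] [AddCommMonoid M] [PartialOrder M]
    [IsOrderedAddMonoid M] [CanonicallyOrderedAdd M] (t : Finset β) (T : β → Finset α)
    (w : α → M) : ∑ c ∈ t.biUnion T, w c ≤ ∑ b ∈ t, ∑ c ∈ T b, w c := by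
  classical
  induction t using Finset.induction_on with
  | empty => simp
  | insert b t hb ih =>
    rw [biUnion_insert, sum_insert hb]
    exact le_self_add.trans_eq (sum_union_inter ..) |>.trans (add_le_add_right ih _)

theorem ENNReal.sum_powerset_prod_le_exp {α : Type*} {s : Finset α} {w : α → ℝ≥0∞} {r : ℝ}
    (hr : 0 ≤ r) (h : ∑ c ∈ s, w c ≤ ENNReal.ofReal r) :
    ∑ U ∈ s.powerset, ∏ c ∈ U, w c ≤ ENNReal.ofReal (Real.exp r) := by
  have hfin : ∀ c ∈ s, w c ≠ ∞ := fun c hc =>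
    ne_top_of_le_ne_top ofReal_ne_top ((single_le_sum (fun _ _ => zero_le) hc).trans h)
  calc ∑ U ∈ s.powerset, ∏ c ∈ U, w c = ∏ c ∈ s, (1 + w c) := (prod_one_add s).symm
    _ = ENNReal.ofReal (∏ c ∈ s, (1 + (w c).toReal)) := by
      rw [ofReal_prod_of_nonneg fun _ _ => by positivity]
      refine prod_congr rfl fun c hc => ?_
      rw [ofReal_add zero_le_one toReal_nonneg, ofReal_one, ofReal_toReal (hfin c hc)]
    _ ≤ ENNReal.ofReal (Real.exp (∑ c ∈ s, (w c).toReal)) :=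
      ofReal_le_ofReal (Real.prod_one_add_le_exp_sum s fun _ => toReal_nonneg)
    _ ≤ ENNReal.ofReal (Real.exp r) := by
      rw [← toReal_sum hfin]
      gcongr
      exact toReal_le_of_le_ofReal hr h

section Components

variable {ι : Type} [DecidableEq ι]

def FamAdj (T : Finset (Finset ι)) (A A' : Finset ι) : Prop :=
  A ∈ T ∧ A' ∈ T ∧ (A ∩ A').Nonempty

def FamLinked (T : Finset (Finset ι)) : Finset ι → Finset ι → Prop :=
  Relation.ReflTransGen (FamAdj T)

noncomputable def famComponent (T : Finset (Finset ι)) (D : Finset ι) : Finset (Finset ι) :=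
  {E ∈ T | FamLinked T D E}

variable {T S : Finset (Finset ι)} {B D E : Finset ι}

instance : Std.Symm (FamAdj T) := ⟨fun _ _ ⟨hA, hA', h⟩ => ⟨hA', hA, by rwa [inter_comm]⟩⟩

theorem FamLinked.symm (h : FamLinked T D E) : FamLinked T E D :=
  Std.Symm.symm (r := Relation.ReflTransGen (FamAdj T)) _ _ h

theorem mem_famComponent_self (hD : D ∈ T) : D ∈ famComponent T D :=
  mem_filter.2 ⟨hD, Relation.ReflTransGen.refl⟩

theorem famComponent_subset : famComponent T D ⊆ T := filter_subset _ _

theorem famComponent_eq_of_famLinked (h : FamLinked T D E) :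
    famComponent T D = famComponent T E := by
  ext F
  simp only [famComponent, mem_filter]
  exact and_congr_right fun _ => ⟨h.symm.trans, h.trans⟩

theorem famComponent_eq_famComponent_iff (hD : D ∈ T) :
    famComponent T D = famComponent T E ↔ D ∈ famComponent T E := by
  refine ⟨fun h => h ▸ mem_famComponent_self hD, fun h => ?_⟩
  exact (famComponent_eq_of_famLinked (mem_filter.1 h).2).symm

theorem reachable_of_famAdj (h : FamAdj S D E) :
    (SimpleGraph.fromRel (fun A B : S => (A.1 ∩ B.1).Nonempty)).Reachable ⟨D, h.1⟩ ⟨E, h.2.1⟩ := by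
  by_cases hDE : D = E
  · subst hDE; rfl
  · exact SimpleGraph.Adj.reachable <|
      (SimpleGraph.fromRel_adj ..).2 ⟨fun h => hDE (congrArg Subtype.val h), Or.inl h.2.2⟩

theorem famConnected_of_forall_famLinked (hD : D ∈ S) (h : ∀ E ∈ S, FamLinked S D E) :
    FamConnected S := by
  have reach : ∀ E, FamLinked S D E → ∀ hE : E ∈ S,
      (SimpleGraph.fromRel (fun A B : S => (A.1 ∩ B.1).Nonempty)).Reachable ⟨D, hD⟩ ⟨E, hE⟩ := by
    intro E hDE
    induction hDE with
    | refl => exact fun _ => .rfl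
    | tail _ hadj ih => exact fun _ => (ih hadj.1).trans (reachable_of_famAdj hadj)
  have : Nonempty S := ⟨⟨D, hD⟩⟩
  exact ⟨fun u v => (reach u (h u u.2) u.2).symm.trans (reach v (h v v.2) v.2)⟩

theorem FamConnected.famLinked (hS : FamConnected S) (hD : D ∈ S) (hE : E ∈ S) :
    FamLinked S D E := by
  have := (SimpleGraph.reachable_iff_reflTransGen _ _).1 (hS.preconnected ⟨D, hD⟩ ⟨E, hE⟩)
  refine this.lift Subtype.val fun u v huv => ⟨u.2, v.2, ?_⟩
  rcases ((SimpleGraph.fromRel_adj ..).1 huv).2 with h | h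
  exacts [h, by rwa [inter_comm]]

theorem famConnected_famComponent (hD : D ∈ T) : FamConnected (famComponent T D) := by
  refine famConnected_of_forall_famLinked (mem_famComponent_self hD) fun E hE => ?_
  induction (mem_filter.1 hE).2 with
  | refl => exact .refl
  | @tail F _ hDF hadj ih =>
    have mem : ∀ {G}, G ∈ T → FamLinked T D G → G ∈ famComponent T D :=
      fun hG hDG => mem_filter.2 ⟨hG, hDG⟩
    exact (ih (mem hadj.1 hDF)).tail ⟨mem hadj.1 hDF, mem hadj.2.1 (hDF.tail hadj), hadj.2.2⟩

/-- Follow the chain from `D` to `B` up to its first step into `B`. -/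
theorem exists_mem_famComponent_erase_inter_nonempty (hL : FamLinked S D B)
    (hD : D ∈ S.erase B) : ∃ D' ∈ famComponent (S.erase B) D, (D' ∩ B).Nonempty := by
  induction hL using Relation.ReflTransGen.head_induction_on with
  | refl => exact absurd rfl (ne_of_mem_erase hD)
  | @head D D₁ hadj _ ih =>
    by_cases hD₁ : D₁ = B
    · exact ⟨D, mem_famComponent_self hD, hD₁ ▸ hadj.2.2⟩
    · have hD₁' : D₁ ∈ S.erase B := mem_erase.2 ⟨hD₁, hadj.2.1⟩
      rw [famComponent_eq_of_famLinked (.single ⟨hD, hD₁', hadj.2.2⟩)]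
      exact ih hD₁'

theorem biUnion_image_famComponent (T : Finset (Finset ι)) :
    (T.image (famComponent T)).biUnion id = T := by
  ext E
  simp only [mem_biUnion, mem_image, id]
  refine ⟨fun ⟨_, ⟨_, _, hc⟩, hE⟩ => famComponent_subset (hc ▸ hE), fun hE => ?_⟩
  exact ⟨_, ⟨E, hE, rfl⟩, mem_famComponent_self hE⟩

theorem prod_image_famComponent {M : Type*} [CommMonoid M] (T : Finset (Finset ι))
    (f : Finset ι → M) : ∏ c ∈ T.image (famComponent T), ∏ D ∈ c, f D = ∏ D ∈ T, f D := by
  refine prod_image' f fun D hD => prod_congr ?_ fun _ _ => rfl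
  ext E
  simp only [mem_filter]
  exact ⟨fun hE => ⟨famComponent_subset hE, ((famComponent_eq_famComponent_iff
    (famComponent_subset hE)).2 hE)⟩, fun ⟨hE, h⟩ => (famComponent_eq_famComponent_iff hE).1 h⟩

end Components

section Clusters

variable {ι : Type} [DecidableEq ι] (φ : Finset ι → ℝ≥0∞)

noncomputable def clustersContaining (Δ : Finset (Finset ι)) (B : Finset ι) :
    Finset (Finset (Finset ι)) :=
  {S ∈ Δ.powerset | B ∈ S ∧ FamConnected S}

/-- The paper's `Y(Δ|B)`. -/
noncomputable def clusterSum (Δ : Finset (Finset ι)) (B : Finset ι) : ℝ≥0∞ :=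
  ∑ S ∈ clustersContaining Δ B, ∏ B' ∈ S, φ B'

noncomputable def touchingClusters (Δ : Finset (Finset ι)) (B : Finset ι) :
    Finset (Finset (Finset ι)) :=
  {c ∈ Δ.powerset | FamConnected c ∧ ∃ D ∈ c, (D ∩ B).Nonempty}

theorem clusterSum_le_mul_sum_powerset_touchingClusters (Δ : Finset (Finset ι))
    (B : Finset ι) : clusterSum φ Δ B ≤
      φ B * ∑ U ∈ (touchingClusters (Δ.erase B) B).powerset, ∏ c ∈ U, ∏ D ∈ c, φ D := by
  set components : Finset (Finset ι) → Finset (Finset (Finset ι)) :=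
    fun S => (S.erase B).image (famComponent (S.erase B))
  have maps_to : ∀ S ∈ clustersContaining Δ B,
      components S ∈ (touchingClusters (Δ.erase B) B).powerset := by
    intro S hS
    obtain ⟨hSΔ, hBS, hS⟩ := mem_filter.1 hS
    refine mem_powerset.2 fun c hc => ?_
    obtain ⟨D, hD, rfl⟩ := mem_image.1 hc
    refine mem_filter.2 ⟨mem_powerset.2 ?_, famConnected_famComponent hD, ?_⟩
    · exact famComponent_subset.trans (erase_subset_erase B (mem_powerset.1 hSΔ))
    · exact exists_mem_famComponent_erase_inter_nonempty
        (hS.famLinked (mem_of_mem_erase hD) hBS) hD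
  have inj : Set.InjOn components (clustersContaining Δ B) := by
    intro S₁ h₁ S₂ h₂ h
    have : S₁.erase B = S₂.erase B := by
      rw [← biUnion_image_famComponent (S₁.erase B), ← biUnion_image_famComponent (S₂.erase B)]
      exact congrArg (·.biUnion id) h
    rw [← insert_erase (mem_filter.1 h₁).2.1, ← insert_erase (mem_filter.1 h₂).2.1, this]
  calc clusterSum φ Δ B
      = ∑ S ∈ clustersContaining Δ B, φ B * ∏ c ∈ components S, ∏ D ∈ c, φ D := by
        refine sum_congr rfl fun S hS => ?_
        rw [prod_image_famComponent, mul_prod_erase _ _ (mem_filter.1 hS).2.1]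
    _ = ∑ U ∈ (clustersContaining Δ B).image components,
          φ B * ∏ c ∈ U, ∏ D ∈ c, φ D :=
        (sum_image (f := fun U => φ B * ∏ c ∈ U, ∏ D ∈ c, φ D) inj).symm
    _ ≤ ∑ U ∈ (touchingClusters (Δ.erase B) B).powerset, φ B * ∏ c ∈ U, ∏ D ∈ c, φ D :=
        sum_le_sum_of_subset (image_subset_iff.2 maps_to)
    _ = _ := (mul_sum ..).symm

theorem sum_touchingClusters_le (Δ : Finset (Finset ι)) (B : Finset ι) :
    ∑ c ∈ touchingClusters Δ B, ∏ D ∈ c, φ D ≤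
      ∑ x ∈ B, ∑ D ∈ Δ with x ∈ D, clusterSum φ Δ D := by
  have cover : touchingClusters Δ B ⊆ B.biUnion fun x =>
      {D ∈ Δ | x ∈ D}.biUnion (clustersContaining Δ) := by
    intro c hc
    obtain ⟨hcΔ, hc, D, hDc, x, hx⟩ := mem_filter.1 hc
    simp only [mem_biUnion, mem_filter]
    exact ⟨x, (mem_inter.1 hx).2, D, ⟨mem_powerset.1 hcΔ hDc, (mem_inter.1 hx).1⟩,
      mem_filter.2 ⟨hcΔ, hDc, hc⟩⟩
  calc ∑ c ∈ touchingClusters Δ B, ∏ D ∈ c, φ D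
      ≤ ∑ c ∈ B.biUnion (fun x => {D ∈ Δ | x ∈ D}.biUnion (clustersContaining Δ)),
          ∏ D ∈ c, φ D :=
        sum_le_sum_of_subset cover
    _ ≤ _ := (sum_biUnion_le ..).trans (sum_le_sum fun x _ => sum_biUnion_le ..)

theorem clusterSum_le_of_forall_sum_erase_le {a : ℝ} (ha : 0 ≤ a) {Δ : Finset (Finset ι)}
    {B : Finset ι}
    (h : ∀ x, ∑ D ∈ Δ.erase B with x ∈ D, clusterSum φ (Δ.erase B) D ≤ ENNReal.ofReal a) :
    clusterSum φ Δ B ≤ φ B * ENNReal.ofReal (Real.exp (a * #B)) := by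
  refine (clusterSum_le_mul_sum_powerset_touchingClusters φ Δ B).trans ?_
  gcongr
  refine ENNReal.sum_powerset_prod_le_exp (by positivity) ?_
  calc ∑ c ∈ touchingClusters (Δ.erase B) B, ∏ D ∈ c, φ D
      ≤ ∑ _x ∈ B, ENNReal.ofReal a :=
        (sum_touchingClusters_le φ _ B).trans (sum_le_sum fun x _ => h x)
    _ = ENNReal.ofReal (a * #B) := by
      rw [sum_const, nsmul_eq_mul, ENNReal.ofReal_mul' (Nat.cast_nonneg _),
        ENNReal.ofReal_natCast, mul_comm]

theorem sum_clusterSum_le {a : ℝ} (ha : 0 ≤ a)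
    (hφ : ∀ x : ι, ∑' B : {B : Finset ι // x ∈ B},
      φ B.1 * ENNReal.ofReal (Real.exp (a * B.1.card)) ≤ ENNReal.ofReal a)
    (Δ : Finset (Finset ι)) (x : ι) :
    ∑ B ∈ Δ with x ∈ B, clusterSum φ Δ B ≤ ENNReal.ofReal a := by
  induction Δ using Finset.strongInduction generalizing x with
  | H Δ ih =>
  calc ∑ B ∈ Δ with x ∈ B, clusterSum φ Δ B
      ≤ ∑ B ∈ Δ with x ∈ B, φ B * ENNReal.ofReal (Real.exp (a * #B)) :=
        sum_le_sum fun B hB => clusterSum_le_of_forall_sum_erase_le φ ha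
          (ih _ (erase_ssubset (mem_filter.1 hB).1))
    _ = ∑ B ∈ Δ.subtype (x ∈ ·), φ B.1 * ENNReal.ofReal (Real.exp (a * B.1.card)) :=
        (sum_subtype_eq_sum_filter ..).symm
    _ ≤ _ := ENNReal.sum_le_tsum _
    _ ≤ _ := hφ x

end Clusters

/-- Kotecky–Preiss style induction bound: if `sup_x Σ_{B∋x} φ(B) e^{a|B|} ≤ a`, then with
`Y(Δ|B) = Σ over connected subcollections of Δ containing B of ∏ φ`, one has
`sup_x Σ_{B∋x, B∈Δ} Y(Δ|B) ≤ a` uniformly in the finite collection `Δ`. -/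
theorem stmt16 {d : ℕ} (a : ℝ) (ha : 0 < a)
    (φ : Finset (Fin d → ℤ) → ℝ≥0∞)
    (hφ : ∀ x : Fin d → ℤ,
      ∑' B : {B : Finset (Fin d → ℤ) // x ∈ B},
          φ B.1 * ENNReal.ofReal (Real.exp (a * B.1.card)) ≤ ENNReal.ofReal a)
    (Y : Finset (Finset (Fin d → ℤ)) → Finset (Fin d → ℤ) → ℝ≥0∞)
    (hY : ∀ Δ B, Y Δ B =
      ∑ S ∈ Δ.powerset.filter (fun S => B ∈ S ∧ FamConnected S), ∏ B' ∈ S, φ B') :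
    ∀ (Δ : Finset (Finset (Fin d → ℤ))) (x : Fin d → ℤ),
      ∑ B ∈ Δ.filter (fun B => x ∈ B), Y Δ B ≤ ENNReal.ofReal a := by
  intro Δ x
  simp_rw [hY]
  exact sum_clusterSum_le φ ha.le hφ Δ x
end
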